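/- For square complex matrices A and B of order n, ‖A + B‖_* = ‖A‖_* + ‖B‖_* if and only if there exists a unitary (orthogonal in the real case) matrix P such that both PA and PB are positive semidefinite. -/

import Mathlib

/-!
For every square matrix `X`, `re tr X ≤ ‖X‖_*`, with equality exactly when `X ≥ 0`: writing the
polar decomposition `X = V K` (`V` unitary, `K ≥ 0`), this says `re tr (V K) ≤ tr K`, and with
`S = √K` the defect `2 (tr K - re tr (V K))` is `‖S - V S‖²` in the Frobenius norm.
Now choose a unitary `P` with `P (A + B) ≥ 0`. Since the trace norm is invariant under left
multiplication by unitaries, `‖A + B‖_* = re tr (P A) + re tr (P B) ≤ ‖A‖_* + ‖B‖_*`, with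
equality iff `P A ≥ 0` and `P B ≥ 0`.
-/

open Matrix BigOperators
open scoped ComplexOrder

/-- Trace norm of a complex matrix: sum of singular values
(square roots of eigenvalues of `M * Mᴴ`). -/
noncomputable def traceNorm {n : ℕ} (M : Matrix (Fin n) (Fin n) ℂ) : ℝ :=
  ∑ i, Real.sqrt ((Matrix.isHermitian_mul_conjTranspose_self M).eigenvalues i)

theorem exists_orthonormalBasis_smul_eq_of_pairwise_inner_eq_zero {𝕜 E ι : Type*} [RCLike 𝕜]
    [NormedAddCommGroup E] [InnerProductSpace 𝕜 E] [FiniteDimensional 𝕜 E] [Fintype ι]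
    {c : ι → E} (hc : Pairwise fun i j => inner 𝕜 (c i) (c j) = 0)
    (hcard : Module.finrank 𝕜 E = Fintype.card ι) :
    ∃ b : OrthonormalBasis ι 𝕜 E, ∀ i, c i = (‖c i‖ : 𝕜) • b i := by
  set s : Set ι := {i | c i ≠ 0}
  have hv : Orthonormal 𝕜 (s.domRestrict fun i => (‖c i‖⁻¹ : 𝕜) • c i) := by
    refine ⟨fun i => norm_smul_inv_norm i.2, fun i j hij => ?_⟩
    simp only [Set.domRestrict_apply, inner_smul_left, inner_smul_right,
      hc (Subtype.coe_ne_coe.mpr hij), mul_zero]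
  obtain ⟨b, hb⟩ := hv.exists_orthonormalBasis_extension_of_card_eq hcard
  refine ⟨b, fun i => ?_⟩
  by_cases hi : c i = 0
  · simp [hi]
  · rw [hb i hi, smul_inv_smul₀ (by simpa using hi)]

namespace Matrix

variable {𝕜 ι : Type*} [RCLike 𝕜] [Fintype ι] [DecidableEq ι]

theorem IsHermitian.trace_cfc {A : Matrix ι ι 𝕜} (hA : A.IsHermitian) (f : ℝ → ℝ) :
    (cfc f A).trace = ∑ i, (f (hA.eigenvalues i) : 𝕜) := by
  rw [hA.cfc_eq, IsHermitian.cfc, Unitary.conjStarAlgAut_apply, trace_mul_cycle,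
    Unitary.coe_star_mul_self, one_mul, trace_diagonal]
  rfl

/-- Polar decomposition: the columns of `M W` are orthogonal when `W` diagonalizes `Mᴴ M`, so
`M W = V D` with `V` unitary and `D ≥ 0` diagonal, and `P = W Vᴴ` works. -/
theorem exists_unitary_mul_posSemidef (M : Matrix ι ι 𝕜) :
    ∃ P ∈ unitaryGroup ι 𝕜, (P * M).PosSemidef := by
  have hH := isHermitian_conjTranspose_mul_self M
  set W := hH.eigenvectorUnitary
  set N := M * (W : Matrix ι ι 𝕜)
  set c : ι → EuclideanSpace 𝕜 ι := fun i => WithLp.toLp 2 (fun j => N j i)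
  have hgram : ∀ i j, inner 𝕜 (c i) (c j) = (Nᴴ * N) i j := fun i j => by
    simp [c, PiLp.inner_apply, mul_apply, mul_comm]
  have hNN : Nᴴ * N = diagonal (RCLike.ofReal ∘ hH.eigenvalues) := by
    rw [← hH.conjStarAlgAut_star_eigenvectorUnitary, Unitary.conjStarAlgAut_star_apply]
    simp only [N, conjTranspose_mul, Matrix.mul_assoc]
    rfl
  obtain ⟨b, hb⟩ := exists_orthonormalBasis_smul_eq_of_pairwise_inner_eq_zero (c := c)
    (fun i j hij => (hgram i j).trans (by rw [hNN, diagonal_apply_ne _ hij]))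
    finrank_euclideanSpace
  set V := (EuclideanSpace.basisFun ι 𝕜).toBasis.toMatrix b.toBasis
  have hV : V ∈ unitaryGroup ι 𝕜 :=
    (EuclideanSpace.basisFun ι 𝕜).toMatrix_orthonormalBasis_mem_unitary b
  set D := diagonal fun i => (‖c i‖ : 𝕜)
  have hN : N = V * D := by
    ext j i
    rw [mul_diagonal, mul_comm]
    exact congr($(hb i) j)
  have hM : M = V * D * star (W : Matrix ι ι 𝕜) := by
    rw [← hN, Matrix.mul_assoc, mem_unitaryGroup_iff.mp W.2, Matrix.mul_one]
  have hPM : W * star V * M = W * D * star (W : Matrix ι ι 𝕜) := by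
    rw [hM, Matrix.mul_assoc (W : Matrix ι ι 𝕜), ← Matrix.mul_assoc (star V),
      ← Matrix.mul_assoc (star V), mem_unitaryGroup_iff'.mp hV, Matrix.one_mul, Matrix.mul_assoc]
  refine ⟨W * star V, Submonoid.mul_mem _ W.2 (Unitary.star_mem hV), ?_⟩
  rw [hPM]
  exact (PosSemidef.diagonal fun i => RCLike.ofReal_nonneg.mpr (norm_nonneg _))
    |>.mul_mul_conjTranspose_same _

theorem exists_eq_unitary_mul_posSemidef (M : Matrix ι ι 𝕜) :
    ∃ V ∈ unitaryGroup ι 𝕜, ∃ K : Matrix ι ι 𝕜, K.PosSemidef ∧ M = V * K := by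
  obtain ⟨P, hP, hPM⟩ := exists_unitary_mul_posSemidef M
  refine ⟨star P, Unitary.star_mem hP, P * M, hPM, ?_⟩
  rw [← Matrix.mul_assoc, mem_unitaryGroup_iff'.mp hP, Matrix.one_mul]

section Sqrt

open scoped MatrixOrder

variable {V K : Matrix ι ι 𝕜}

theorem re_trace_sub_unitary_mul_eq (hV : V ∈ unitaryGroup ι 𝕜) (hK : K.PosSemidef) :
    RCLike.re ((CFC.sqrt K - V * CFC.sqrt K)ᴴ * (CFC.sqrt K - V * CFC.sqrt K)).trace =
      2 * (RCLike.re K.trace - RCLike.re (V * K).trace) := by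
  set S := CFC.sqrt K
  have hS : Sᴴ = S := (CFC.sqrt_nonneg K).posSemidef.1
  have hSS : S * S = K := CFC.sqrt_mul_sqrt_self K hK.nonneg
  have hVV : Vᴴ * V = 1 := mem_unitaryGroup_iff'.mp hV
  have hgram : (S - V * S)ᴴ * (S - V * S) = K + K - (S * (V * S) + (S * (V * S))ᴴ) := by
    simp only [conjTranspose_sub, conjTranspose_mul, hS, sub_mul, mul_sub, Matrix.mul_assoc]
    rw [← Matrix.mul_assoc Vᴴ, hVV, Matrix.one_mul, hSS]
    abel
  rw [hgram, trace_sub, trace_add, trace_add, trace_conjTranspose, ← Matrix.mul_assoc,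
    trace_mul_cycle, hSS, trace_mul_comm K]
  simp only [map_sub, map_add, RCLike.star_def, RCLike.conj_re]
  ring

theorem re_trace_unitary_mul_le (hV : V ∈ unitaryGroup ι 𝕜) (hK : K.PosSemidef) :
    RCLike.re (V * K).trace ≤ RCLike.re K.trace := by
  have := (RCLike.nonneg_iff.mp
    (posSemidef_conjTranspose_mul_self (CFC.sqrt K - V * CFC.sqrt K)).trace_nonneg).1
  rw [re_trace_sub_unitary_mul_eq hV hK] at this
  linarith

theorem unitary_mul_eq_of_re_trace_eq (hV : V ∈ unitaryGroup ι 𝕜) (hK : K.PosSemidef)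
    (h : RCLike.re (V * K).trace = RCLike.re K.trace) : V * K = K := by
  set D := CFC.sqrt K - V * CFC.sqrt K
  have him := (RCLike.nonneg_iff.mp (posSemidef_conjTranspose_mul_self D).trace_nonneg).2
  have hzero : (Dᴴ * D).trace = 0 := RCLike.ext
    (by rw [re_trace_sub_unitary_mul_eq hV hK, h, sub_self, mul_zero, map_zero])
    (by rw [him, map_zero])
  have hVS : V * CFC.sqrt K = CFC.sqrt K :=
    (sub_eq_zero.mp (trace_conjTranspose_mul_self_eq_zero_iff.mp hzero)).symm
  rw [← CFC.sqrt_mul_sqrt_self K hK.nonneg, ← Matrix.mul_assoc, hVS]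

end Sqrt

end Matrix

section TraceNorm

variable {n : ℕ}

open scoped MatrixOrder

theorem traceNorm_eq_re_trace_sqrt (M : Matrix (Fin n) (Fin n) ℂ) :
    traceNorm M = (CFC.sqrt (M * Mᴴ)).trace.re := by
  rw [CFC.sqrt_eq_real_sqrt _ (posSemidef_self_mul_conjTranspose M).nonneg, cfcₙ_eq_cfc,
    (isHermitian_mul_conjTranspose_self M).trace_cfc, Complex.re_sum]
  rfl

theorem traceNorm_of_posSemidef {M : Matrix (Fin n) (Fin n) ℂ} (hM : M.PosSemidef) :
    traceNorm M = M.trace.re := by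
  rw [traceNorm_eq_re_trace_sqrt, hM.1.eq, CFC.sqrt_mul_self M hM.nonneg]

theorem traceNorm_unitary_mul {U : Matrix (Fin n) (Fin n) ℂ} (hU : U ∈ unitaryGroup (Fin n) ℂ)
    (M : Matrix (Fin n) (Fin n) ℂ) : traceNorm (U * M) = traceNorm M := by
  have hUU : Uᴴ * U = 1 := mem_unitaryGroup_iff'.mp hU
  have hcharpoly : ((U * M) * (U * M)ᴴ).charpoly = (M * Mᴴ).charpoly := by
    rw [conjTranspose_mul, Matrix.mul_assoc, charpoly_mul_comm, Matrix.mul_assoc,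
      Matrix.mul_assoc, hUU, Matrix.mul_one]
  unfold traceNorm
  rw [((isHermitian_mul_conjTranspose_self _).eigenvalues_eq_eigenvalues_iff
    (isHermitian_mul_conjTranspose_self M)).mpr hcharpoly]

theorem re_trace_le_traceNorm (X : Matrix (Fin n) (Fin n) ℂ) : X.trace.re ≤ traceNorm X := by
  obtain ⟨V, hV, K, hK, rfl⟩ := exists_eq_unitary_mul_posSemidef X
  rw [traceNorm_unitary_mul hV, traceNorm_of_posSemidef hK]
  exact re_trace_unitary_mul_le hV hK

theorem posSemidef_of_re_trace_eq_traceNorm {X : Matrix (Fin n) (Fin n) ℂ}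
    (h : X.trace.re = traceNorm X) : X.PosSemidef := by
  obtain ⟨V, hV, K, hK, rfl⟩ := exists_eq_unitary_mul_posSemidef X
  rw [traceNorm_unitary_mul hV, traceNorm_of_posSemidef hK] at h
  rwa [unitary_mul_eq_of_re_trace_eq hV hK h]

end TraceNorm

theorem traceNorm_add_eq_iff {n : ℕ} (A B : Matrix (Fin n) (Fin n) ℂ) :
    traceNorm (A + B) = traceNorm A + traceNorm B ↔
      ∃ P : Matrix (Fin n) (Fin n) ℂ, P ∈ Matrix.unitaryGroup (Fin n) ℂ ∧
        (P * A).PosSemidef ∧ (P * B).PosSemidef := by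
  constructor
  · intro h
    obtain ⟨P, hP, hPAB⟩ := exists_unitary_mul_posSemidef (A + B)
    have hsum : (P * A).trace.re + (P * B).trace.re = traceNorm (P * A) + traceNorm (P * B) := by
      rw [traceNorm_unitary_mul hP, traceNorm_unitary_mul hP, ← h,
        ← traceNorm_unitary_mul hP, traceNorm_of_posSemidef hPAB, mul_add, trace_add,
        Complex.add_re]
    have hA := re_trace_le_traceNorm (P * A)
    have hB := re_trace_le_traceNorm (P * B)
    exact ⟨P, hP, posSemidef_of_re_trace_eq_traceNorm (by linarith),
      posSemidef_of_re_trace_eq_traceNorm (by linarith)⟩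
  · rintro ⟨P, hP, hA, hB⟩
    rw [← traceNorm_unitary_mul hP (A + B), mul_add, traceNorm_of_posSemidef (hA.add hB),
      trace_add, Complex.add_re, ← traceNorm_of_posSemidef hA, ← traceNorm_of_posSemidef hB,
      traceNorm_unitary_mul hP, traceNorm_unitary_mul hP]
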